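/- arXiv:1601.03424 — 2 statements merged into one kernel-verified Lean document; each statement's English description precedes it below -/
import Mathlib

section
/- Let F be a field containing only finitely many roots of unity (the torsion subgroup μ(F) of F^× is finite). Then the following are equivalent: (i) F is rootless; (ii) F is rootless modtor; (iii) for every a ∈ F that is neither zero nor a root of unity, the polynomial X − a has good heredity over F. -/
open Polynomial

/-- `a` is a root of unity, i.e. a torsion element of the multiplicative monoid. -/
def IsRootOfUnityElem {F : Type*} [Monoid F] (a : F) : Prop := ∃ n : ℕ, 0 < n ∧ a ^ n = 1

/-- `P` is hereditarily irreducible over `F`: `P(X^n)` is irreducible for every `n ≥ 1`. -/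
def HeredIrreducible {F : Type*} [Field F] (P : F[X]) : Prop :=
  ∀ n : ℕ, 0 < n → Irreducible (P.comp (X ^ n))

/-- `P` has good heredity over `F`: some `P(X^n)` is a product of hereditarily
irreducible polynomials. -/
def HasGoodHeredity {F : Type*} [Field F] (P : F[X]) : Prop :=
  ∃ n : ℕ, 0 < n ∧ ∃ l : Multiset F[X],
    (∀ Q ∈ l, HeredIrreducible Q) ∧ P.comp (X ^ n) = l.prod

/-- `a` is rootless in `F`: only finitely many positive `n` admit a solution of `x^n = a`. -/
def RootlessElem {F : Type*} [Field F] (a : F) : Prop :=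
  {n : ℕ | 0 < n ∧ ∃ x : F, x ^ n = a}.Finite

/-- `a` is rootless modtor in `F`: only finitely many positive `n` admit a root of unity `ζ`
and `g` with `g^n = ζ * a`. -/
def RootlessModtorElem {F : Type*} [Field F] (a : F) : Prop :=
  {n : ℕ | 0 < n ∧ ∃ ζ g : F, IsRootOfUnityElem ζ ∧ g ^ n = ζ * a}.Finite

/-- `a` is very rootless: it is not a proper power. -/
def VeryRootless {F : Type*} [Field F] (a : F) : Prop :=
  ¬ ∃ (g : F) (n : ℕ), 2 ≤ n ∧ a = g ^ n

/-- `a` is very rootless modtor: it is not a proper power times a root of unity. -/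
def VeryRootlessModtor {F : Type*} [Field F] (a : F) : Prop :=
  ¬ ∃ (ζ g : F) (n : ℕ), IsRootOfUnityElem ζ ∧ 2 ≤ n ∧ a = ζ * g ^ n

/-- A field is rootless if all its elements that are neither zero nor roots of unity are. -/
def RootlessField (F : Type*) [Field F] : Prop :=
  ∀ a : F, a ≠ 0 → ¬ IsRootOfUnityElem a → RootlessElem a

/-- A field is rootless modtor if all its elements that are neither zero nor
roots of unity are. -/
def RootlessModtorField (F : Type*) [Field F] : Prop :=
  ∀ a : F, a ≠ 0 → ¬ IsRootOfUnityElem a → RootlessModtorElem a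

/-- A field has good heredity if every polynomial none of whose roots in an algebraic
closure is zero or a root of unity has good heredity. -/
def GoodHeredityField (F : Type*) [Field F] : Prop :=
  ∀ P : F[X],
    (∀ b : AlgebraicClosure F, Polynomial.aeval b P = 0 → b ≠ 0 ∧ ¬ IsRootOfUnityElem b) →
    HasGoodHeredity P

/-!
Rootless implies rootless modtor by raising to a common order `m` of the finitely many roots
of unity: `g ^ n = ζ * a` gives `g ^ (n * m) = a ^ m`. Good heredity makes `a` rootless: if
`X ^ n - a` is a product of hereditarily irreducible `Qᵢ` and `x ^ k = a` with `k > n`, then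
`X ^ n - x` divides `∏ Qᵢ(X ^ k)`, all of whose irreducible factors have degree at least `k`.

For good heredity, let `N` be the largest exponent with `a ∈ μ(F) · F ^ N`. Taking norms shows
that every `z` with `z ^ M = a` satisfies `M ∣ N * deg z`. By Capelli's theorem `X ^ m - c` is
irreducible over `F(c)` for every `m` unless `c` is a `p`-th power or of the form `-4 u ^ 4` in
`F(c)`; the divisibility gives `p ≤ N`, so in that case already `X ^ (4 N!) - c` is reducible and
the positive integer `N * deg c / M` drops strictly from `c` to its `4 N!`-th roots. As it starts
at most `N`, and hereditary irreducibility of the minimal polynomial passes from `c` to its roots,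
every root of `X ^ ((4 N!) ^ N) - a` has a hereditarily irreducible minimal polynomial.
-/

open IntermediateField
open scoped Nat

universe u

lemma isRootOfUnityElem_iff_isOfFinOrder {M : Type*} [Monoid M] {a : M} :
    IsRootOfUnityElem a ↔ IsOfFinOrder a :=
  isOfFinOrder_iff_pow_eq_one.symm

lemma exists_pos_forall_pow_eq_one_of_finite {M : Type*} [Monoid M]
    (h : {a : M | IsRootOfUnityElem a}.Finite) :
    ∃ m, 0 < m ∧ ∀ ζ : M, IsRootOfUnityElem ζ → ζ ^ m = 1 := by
  classical
  refine ⟨∏ ζ ∈ h.toFinset, orderOf ζ, Finset.prod_pos fun ζ hζ => ?_, fun ζ hζ => ?_⟩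
  · exact (isRootOfUnityElem_iff_isOfFinOrder.mp (h.mem_toFinset.mp hζ)).orderOf_pos
  · exact orderOf_dvd_iff_pow_eq_one.mp (Finset.dvd_prod_of_mem _ (h.mem_toFinset.mpr hζ))

lemma HeredIrreducible.irreducible {F : Type*} [Field F] {P : F[X]} (h : HeredIrreducible P) :
    Irreducible P := by
  simpa using h 1 one_pos

section Rootless

variable {F : Type*} [Field F]

theorem RootlessModtorField.rootlessField (h : RootlessModtorField F) : RootlessField F :=
  fun a ha hator => (h a ha hator).subset fun _ ⟨hn, x, hx⟩ =>
    ⟨hn, 1, x, ⟨1, one_pos, one_pow 1⟩, by rw [hx, one_mul]⟩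

theorem RootlessField.rootlessModtorField (hfin : {a : F | IsRootOfUnityElem a}.Finite)
    (h : RootlessField F) : RootlessModtorField F := by
  obtain ⟨m, hm, hζm⟩ := exists_pos_forall_pow_eq_one_of_finite hfin
  intro a ha hator
  have ham : ¬ IsRootOfUnityElem (a ^ m) := fun ⟨k, hk, hak⟩ =>
    hator ⟨m * k, Nat.mul_pos hm hk, by rwa [pow_mul]⟩
  refine ((h _ (pow_ne_zero m ha) ham).preimage
    (f := (· * m)) fun _ _ _ _ => Nat.eq_of_mul_eq_mul_right hm).subset ?_
  rintro n ⟨hn, ζ, g, hζ, hg⟩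
  exact ⟨Nat.mul_pos hn hm, g, by rw [pow_mul, hg, mul_pow, hζm ζ hζ, one_mul]⟩

lemma le_natDegree_of_irreducible_dvd_prod_comp {l : Multiset F[X]}
    (hl : ∀ Q ∈ l, HeredIrreducible Q) {k : ℕ} (hk : 0 < k) {R : F[X]} (hR : Irreducible R)
    (hdvd : R ∣ (l.map fun Q => Q.comp (X ^ k)).prod) : k ≤ R.natDegree := by
  obtain ⟨_, hQ, hRQ⟩ := hR.prime.exists_mem_multiset_dvd hdvd
  obtain ⟨Q, hQl, rfl⟩ := Multiset.mem_map.mp hQ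
  have hdeg := natDegree_eq_of_degree_eq
    (degree_eq_degree_of_associated (hR.associated_of_dvd (hl Q hQl k hk) hRQ))
  rw [hdeg, natDegree_comp, natDegree_X_pow]
  exact Nat.le_mul_of_pos_left k (hl Q hQl).irreducible.natDegree_pos

theorem rootlessField_of_forall_hasGoodHeredity
    (h : ∀ a : F, a ≠ 0 → ¬ IsRootOfUnityElem a → HasGoodHeredity (X - C a)) :
    RootlessField F := by
  intro a ha hator
  by_contra hinf
  obtain ⟨n, hn, l, hl, hprod⟩ := h a ha hator
  obtain ⟨k, ⟨hk, x, rfl⟩, hnk⟩ := Set.Infinite.exists_gt hinf n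
  have hdvd : X ^ n - C x ∣ (l.map fun Q => Q.comp (X ^ k)).prod := by
    rw [← multiset_prod_comp, ← hprod, comp_assoc, sub_comp, X_comp, C_comp, X_pow_comp,
      ← pow_mul, mul_comm, pow_mul, C_pow]
    exact sub_dvd_pow_sub_pow _ _ k
  have hx : ¬ IsUnit (X ^ n - C x) := fun hu => by
    simpa [natDegree_X_pow_sub_C, hn.ne'] using natDegree_eq_zero_of_isUnit hu
  obtain ⟨R, hR, hRdvd⟩ := WfDvdMonoid.exists_irreducible_factor hx (X_pow_sub_C_ne_zero hn x)
  have hkR := le_natDegree_of_irreducible_dvd_prod_comp hl hk hR (hRdvd.trans hdvd)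
  have hRn := natDegree_le_of_dvd hRdvd (X_pow_sub_C_ne_zero hn x)
  rw [natDegree_X_pow_sub_C] at hRn
  omega

end Rootless

section TorsionFactor

variable {G : Type*} [CommGroup G]

lemma exists_isOfFinOrder_mul_pow_of_coprime {x y ζ : G} {k m : ℕ} (hkm : k.Coprime m)
    (hζ : IsOfFinOrder ζ) (h : x ^ k = ζ * y ^ m) :
    ∃ ξ t : G, IsOfFinOrder ξ ∧ x = ξ * t ^ m := by
  obtain ⟨α, β, hαβ⟩ : IsCoprime (m : ℤ) k := Nat.isCoprime_iff_coprime.mpr hkm.symm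
  refine ⟨ζ ^ β, x ^ α * y ^ β, hζ.zpow, ?_⟩
  calc x = (x ^ α) ^ (m : ℤ) * (x ^ (k : ℤ)) ^ β := by
        rw [← zpow_mul, ← zpow_mul, ← zpow_add, mul_comm (k : ℤ), hαβ, zpow_one]
    _ = ζ ^ β * (x ^ α * y ^ β) ^ m := by
        have hy : (y ^ m) ^ β = (y ^ β) ^ m := by
          rw [← zpow_natCast, ← zpow_natCast, ← zpow_mul, ← zpow_mul, mul_comm]
        rw [zpow_natCast x k, h, mul_zpow, hy, zpow_natCast, mul_pow, mul_left_comm]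

lemma exists_isOfFinOrder_mul_pow_of_pow_eq {x y ζ : G} {k m : ℕ} (hm : 0 < m)
    (hζ : IsOfFinOrder ζ) (h : x ^ k = ζ * y ^ m) :
    ∃ ξ t : G, IsOfFinOrder ξ ∧ x = ξ * t ^ (m / k.gcd m) := by
  have hg : 0 < k.gcd m := Nat.gcd_pos_of_pos_right k hm
  have hk : k / k.gcd m * k.gcd m = k := Nat.div_mul_cancel (Nat.gcd_dvd_left k m)
  have hm' : m / k.gcd m * k.gcd m = m := Nat.div_mul_cancel (Nat.gcd_dvd_right k m)
  have hquot : IsOfFinOrder (x ^ (k / k.gcd m) * (y ^ (m / k.gcd m))⁻¹) := by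
    refine IsOfFinOrder.of_pow (n := k.gcd m) ?_ hg.ne'
    rwa [mul_pow, inv_pow, ← pow_mul, ← pow_mul, hk, hm', h, mul_inv_cancel_right]
  exact exists_isOfFinOrder_mul_pow_of_coprime (Nat.coprime_div_gcd_div_gcd hg) hquot
    (inv_mul_cancel_right _ _).symm

end TorsionFactor

section MaximalExponent

variable {F : Type*} [Field F] {L : Type*} [Field L] [Algebra F L] [Algebra.IsAlgebraic F L]

theorem dvd_mul_natDegree_minpoly_of_pow_eq {a : F} (ha : a ≠ 0) {N : ℕ}
    (hN : IsGreatest {n : ℕ | 0 < n ∧ ∃ ζ g : F, IsRootOfUnityElem ζ ∧ g ^ n = ζ * a} N)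
    {M : ℕ} (hM : 0 < M) {z : L} (hz : z ^ M = algebraMap F L a) :
    M ∣ N * (minpoly F z).natDegree := by
  -- With `g ^ N = ζ * a` and `w` the norm of `z`, `g ^ (N * d) = ζ ^ d * w ^ M` writes `g` as a
  -- root of unity times an `M / gcd (N * d) M`-th power; maximality of `N` forces this to be `1`.
  have hint : IsIntegral F z := Algebra.IsIntegral.isIntegral z
  have := adjoin.finiteDimensional hint
  rw [← adjoin.finrank hint]
  set d := Module.finrank F F⟮z⟯
  obtain ⟨hNpos, ζ, g, hζ, hg⟩ := hN.1
  have hnorm : Algebra.norm F (AdjoinSimple.gen F z) ^ M = a ^ d := by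
    have : AdjoinSimple.gen F z ^ M = algebraMap F F⟮z⟯ a := Subtype.ext hz
    rw [← map_pow, this, Algebra.norm_algebraMap]
  have hζ0 : ζ ≠ 0 := by rintro rfl; obtain ⟨k, hk, h1⟩ := hζ; simp [hk.ne'] at h1
  have hg0 : g ≠ 0 := by rintro rfl; simp [hNpos.ne', hζ0, ha] at hg
  have hw0 : Algebra.norm F (AdjoinSimple.gen F z) ≠ 0 := by
    intro h0; rw [h0, zero_pow hM.ne'] at hnorm; exact pow_ne_zero d ha hnorm.symm
  have hζu : IsOfFinOrder (Units.mk0 ζ hζ0) := by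
    rw [← Units.isOfFinOrder_val]; exact isRootOfUnityElem_iff_isOfFinOrder.mp hζ
  obtain ⟨ξ, t, hξ, hgt⟩ := exists_isOfFinOrder_mul_pow_of_pow_eq hM (hζu.pow (n := d))
    (x := Units.mk0 g hg0) (y := Units.mk0 _ hw0) (k := N * d)
    (Units.ext (by simp [pow_mul, hg, mul_pow, hnorm]))
  set M' := M / (N * d).gcd M
  have hM' : 0 < M' := Nat.div_pos (Nat.gcd_le_right _ hM) (Nat.gcd_pos_of_pos_right _ hM)
  have hmem : N * M' ≤ N := by
    refine hN.2 ⟨by positivity, ((ξ⁻¹ ^ N * Units.mk0 ζ hζ0 : Fˣ) : F), t, ?_, ?_⟩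
    · exact isRootOfUnityElem_iff_isOfFinOrder.mpr
        (Units.isOfFinOrder_val.mpr ((hξ.inv.pow).mul hζu))
    · have := congrArg (fun u : Fˣ => (u : F) ^ N) hgt
      simp only [Units.val_mk0, Units.val_mul, Units.val_pow_eq_pow_val, mul_pow, hg] at this
      rw [Units.val_mul, Units.val_pow_eq_pow_val, Units.val_inv_eq_inv_val, inv_pow,
        Units.val_mk0, mul_assoc, this, ← mul_assoc, inv_mul_cancel₀ (pow_ne_zero _ ξ.ne_zero),
        one_mul, ← pow_mul, mul_comm]
  have hM'1 : M' = 1 := by nlinarith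
  have hMgcd : M' * (N * d).gcd M = M := Nat.div_mul_cancel (Nat.gcd_dvd_right _ _)
  rw [hM'1, one_mul] at hMgcd
  exact hMgcd ▸ Nat.gcd_dvd_left _ _

end MaximalExponent

section Capelli

variable {K : Type u} [Field K]

lemma PowerBasis.exists_eq_algebraMap_add_algebraMap_mul_gen {S : Type*} [CommRing S]
    [Nontrivial S] [Algebra K S] (pb : PowerBasis K S) (hdim : pb.dim = 2) (b : S) :
    ∃ u v : K, b = algebraMap K S u + algebraMap K S v * pb.gen := by
  obtain ⟨f, hf, rfl⟩ := pb.exists_eq_aeval b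
  refine ⟨f.coeff 0, f.coeff 1, ?_⟩
  conv_lhs => rw [eq_X_add_C_of_natDegree_le_one (by omega : f.natDegree ≤ 1)]
  rw [map_add, map_mul, aeval_C, aeval_X, aeval_C, add_comm]

lemma eq_neg_four_mul_pow_four_of_sq_eq {E : Type*} [Field E] [Algebra K E] {y : E} {a : K}
    (hy : y ^ 2 = algebraMap K E a) (hyK : y ∉ Set.range (algebraMap K E)) {u v : K}
    (h : (algebraMap K E u + algebraMap K E v * y) ^ 2 = y) : a = -(4 * u ^ 4) := by
  have hsplit : algebraMap K E (u ^ 2 + a * v ^ 2) + algebraMap K E (2 * u * v - 1) * y = 0 := by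
    simp only [map_add, map_mul, map_pow, map_sub, map_one, map_ofNat]
    linear_combination h - (algebraMap K E v) ^ 2 * hy
  have hcoeff : 2 * u * v - 1 = 0 := by
    by_contra hne
    refine hyK ⟨-(u ^ 2 + a * v ^ 2) / (2 * u * v - 1), ?_⟩
    rw [map_div₀, map_neg, div_eq_iff ((_root_.map_ne_zero _).mpr hne)]
    linear_combination -hsplit
  have hconst : u ^ 2 + a * v ^ 2 = 0 := by
    rwa [hcoeff, map_zero, zero_mul, add_zero, map_eq_zero] at hsplit
  linear_combination 4 * u ^ 2 * hconst - a * (2 * u * v + 1) * hcoeff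

theorem X_pow_two_pow_sub_C_irreducible (k : ℕ) {a : K} (h2 : ∀ b : K, b ^ 2 ≠ a)
    (h4 : ∀ b : K, a ≠ -(4 * b ^ 4)) : Irreducible (X ^ 2 ^ k - C a : K[X]) := by
  induction k generalizing K with
  | zero => simpa using irreducible_X_sub_C a
  | succ k ih =>
    rw [pow_succ]
    apply X_pow_mul_sub_C_irreducible (X_pow_sub_C_irreducible_of_prime Nat.prime_two h2)
    intro E _ _ x hx
    have hint : IsIntegral K x := minpoly.ne_zero_iff.mp (hx ▸ X_pow_sub_C_ne_zero two_pos a)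
    set pb := adjoin.powerBasis hint
    have hdim : pb.dim = 2 := by
      rw [adjoin.powerBasis_dim, hx, natDegree_X_pow_sub_C]
    have hgen : pb.gen = AdjoinSimple.gen K x := adjoin.powerBasis_gen hint
    have hy : pb.gen ^ 2 = algebraMap K K⟮x⟯ a := by
      have := minpoly.aeval K pb.gen
      rwa [hgen, minpoly_gen, hx, map_sub, map_pow, aeval_X, aeval_C, sub_eq_zero] at this
    have hyK : pb.gen ∉ Set.range (algebraMap K K⟮x⟯) := by
      rintro ⟨c, hc⟩
      have := pb.natDegree_minpoly
      rw [← hc, minpoly.eq_X_sub_C, natDegree_X_sub_C, hdim] at this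
      omega
    rw [← hgen]
    refine ih (fun b hb => ?_) (fun b hb => ?_)
    · obtain ⟨u, v, rfl⟩ := pb.exists_eq_algebraMap_add_algebraMap_mul_gen hdim b
      exact h4 u (eq_neg_four_mul_pow_four_of_sq_eq hy hyK hb)
    · -- `-pb.gen` is another square root of `a`, and it is the square of `2 * b ^ 2`.
      obtain ⟨u, v, huv⟩ := pb.exists_eq_algebraMap_add_algebraMap_mul_gen hdim (2 * b ^ 2)
      refine h4 u (eq_neg_four_mul_pow_four_of_sq_eq (y := -pb.gen) (v := -v)
        (by rw [neg_sq, hy]) (fun ⟨c, hc⟩ => hyK ⟨-c, by rw [map_neg, hc, neg_neg]⟩) ?_)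
      rw [map_neg, neg_mul_neg, ← huv, hb]
      ring

/-- Capelli's theorem, sufficiency part. -/
theorem X_pow_sub_C_irreducible_of_forall_prime {a : K}
    (hp : ∀ p : ℕ, p.Prime → ∀ b : K, b ^ p ≠ a) (h4 : ∀ b : K, a ≠ -(4 * b ^ 4)) {m : ℕ}
    (hm : m ≠ 0) : Irreducible (X ^ m - C a : K[X]) := by
  obtain ⟨k, q, hq, rfl⟩ := Nat.exists_eq_two_pow_mul_odd hm
  rcases k.eq_zero_or_pos with rfl | hk
  · simpa using X_pow_sub_C_irreducible_of_odd hq fun p hp' _ => hp p hp'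
  rw [mul_comm]
  apply X_pow_mul_sub_C_irreducible (X_pow_two_pow_sub_C_irreducible k (hp 2 Nat.prime_two) h4)
  intro E _ _ x hx
  have hint : IsIntegral K x :=
    minpoly.ne_zero_iff.mp (hx ▸ X_pow_sub_C_ne_zero (by positivity) a)
  have hnorm : Algebra.norm K (AdjoinSimple.gen K x) = -a := by
    have heven : Even (2 ^ k) := (Nat.even_pow' hk.ne').mpr even_two
    rw [← adjoin.powerBasis_gen hint, Algebra.PowerBasis.norm_gen_eq_coeff_zero_minpoly,
      adjoin.powerBasis_gen, minpoly_gen, hx, adjoin.powerBasis_dim, hx, natDegree_X_pow_sub_C]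
    simp [heven.neg_one_pow, coeff_X_pow, (Nat.two_pow_pos k).ne]
  apply X_pow_sub_C_irreducible_of_odd hq
  intro p hpp hpq b hb
  apply hp p hpp (-Algebra.norm K b)
  rw [(hq.of_dvd_nat hpq).neg_pow, ← map_pow, hb, hnorm, neg_neg]

theorem ne_neg_four_mul_pow_four_of_irreducible_X_pow_sub_C {n : ℕ} {a : K}
    (H : Irreducible (X ^ n - C a)) (hn : 4 ∣ n) (b : K) : a ≠ -(4 * b ^ 4) := by
  obtain ⟨t, rfl⟩ := hn
  have ht : 0 < t :=
    Nat.pos_of_ne_zero (right_ne_zero_of_mul (ne_zero_of_irreducible_X_pow_sub_C H))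
  rintro rfl
  have hdeg : ∀ s : K, (X ^ (2 * t) + C s * X ^ t + C (2 * b ^ 2)).natDegree = 2 * t := by
    intro s
    compute_degree!
    · rw [if_neg (by omega), if_neg (by omega)]
      norm_num
    all_goals omega
  have hfactor : (X ^ (4 * t) - C (-(4 * b ^ 4)) : K[X]) =
      (X ^ (2 * t) + C (-(2 * b)) * X ^ t + C (2 * b ^ 2)) *
        (X ^ (2 * t) + C (2 * b) * X ^ t + C (2 * b ^ 2)) := by
    simp only [map_neg, map_mul, map_pow, map_ofNat, pow_mul']
    ring
  rw [hfactor] at H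
  rcases H.isUnit_or_isUnit rfl with hu | hu <;>
    exact absurd (natDegree_eq_zero_of_isUnit hu) (by rw [hdeg]; omega)

end Capelli

section RootDegrees

variable {K L : Type*} [Field K] [Field L] [Algebra K L]

lemma irreducible_of_aeval_eq_zero_of_natDegree_le {z : L} (hz : IsIntegral K z) {P : K[X]}
    (hP : P ≠ 0) (hroot : aeval z P = 0) (hdeg : P.natDegree ≤ (minpoly K z).natDegree) :
    Irreducible P :=
  (associated_of_dvd_of_natDegree_le (minpoly.dvd K z hroot) hP hdeg).irreducible
    (minpoly.irreducible hz)

lemma natDegree_minpoly_le_of_pow_eq {z : L} {c : K} {m : ℕ} (hm : 0 < m)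
    (hz : z ^ m = algebraMap K L c) : (minpoly K z).natDegree ≤ m := by
  have hroot : aeval z (X ^ m - C c) = 0 := by simp [hz]
  simpa [natDegree_X_pow_sub_C] using
    natDegree_le_of_dvd (minpoly.dvd K z hroot) (X_pow_sub_C_ne_zero hm c)

lemma natDegree_minpoly_eq_iff_irreducible {z : L} {c : K} {m : ℕ} (hm : 0 < m)
    (hz : z ^ m = algebraMap K L c) :
    (minpoly K z).natDegree = m ↔ Irreducible (X ^ m - C c : K[X]) := by
  have hroot : aeval z (X ^ m - C c) = 0 := by simp [hz]
  refine ⟨fun hdeg => ?_, fun hirr => ?_⟩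
  · have hint : IsIntegral K z := minpoly.ne_zero_iff.mp fun h => by simp [h] at hdeg; omega
    exact irreducible_of_aeval_eq_zero_of_natDegree_le hint (X_pow_sub_C_ne_zero hm c) hroot
      (by rw [natDegree_X_pow_sub_C, hdeg])
  · rw [← minpoly.eq_of_irreducible_of_monic hirr hroot (monic_X_pow_sub_C c hm.ne'),
      natDegree_X_pow_sub_C]

end RootDegrees

section AlgebraicExtension

variable {F L : Type*} [Field F] [Field L] [Algebra F L] [Algebra.IsAlgebraic F L]

lemma natDegree_minpoly_eq_mul_of_mem_adjoin {c z : L} (hc : c ∈ F⟮z⟯) :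
    (minpoly F z).natDegree = (minpoly F c).natDegree * (minpoly F⟮c⟯ z).natDegree := by
  have hadj : (F⟮c⟯⟮z⟯).restrictScalars F = F⟮z⟯ := by
    rw [adjoin_simple_adjoin_simple]
    refine le_antisymm ?_ (adjoin.mono F _ _ (Set.subset_insert c {z}))
    rw [adjoin_le_iff, Set.insert_subset_iff, Set.singleton_subset_iff]
    exact ⟨hc, mem_adjoin_simple_self F z⟩
  rw [← adjoin.finrank (Algebra.IsIntegral.isIntegral (R := F) z),
    ← adjoin.finrank (Algebra.IsIntegral.isIntegral (R := F) c),
    ← adjoin.finrank (Algebra.IsIntegral.isIntegral (R := F) z).tower_top, ← hadj]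
  exact (Module.finrank_mul_finrank F F⟮c⟯ F⟮c⟯⟮z⟯).symm

lemma heredIrreducible_minpoly_of_pow_eq {c z : L} {k : ℕ} (hk : 0 < k) (hz : z ^ k = c)
    (hc : HeredIrreducible (minpoly F c)) : HeredIrreducible (minpoly F z) := by
  have hmin : (minpoly F c).comp (X ^ k) = minpoly F z :=
    minpoly.eq_of_irreducible_of_monic (hc k hk) (by simp [aeval_comp, hz])
      ((minpoly.monic (Algebra.IsIntegral.isIntegral (R := F) c)).comp (monic_X_pow k)
        (by simp; omega))
  intro m hm
  rw [← hmin, comp_assoc, X_pow_comp, ← pow_mul]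
  exact hc (m * k) (by positivity)

variable [IsAlgClosed L]

lemma heredIrreducible_minpoly_of_forall_irreducible {c : L}
    (h : ∀ m, 0 < m → Irreducible (X ^ m - C (AdjoinSimple.gen F c))) :
    HeredIrreducible (minpoly F c) := by
  intro m hm
  obtain ⟨z, hz⟩ := IsAlgClosed.exists_pow_nat_eq c hm
  have hzc : z ^ m = algebraMap F⟮c⟯ L (AdjoinSimple.gen F c) := by
    rw [AdjoinSimple.algebraMap_gen, hz]
  have hdeg : (minpoly F z).natDegree = (minpoly F c).natDegree * m := by
    rw [natDegree_minpoly_eq_mul_of_mem_adjoin (hz ▸ pow_mem (mem_adjoin_simple_self F z) m),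
      (natDegree_minpoly_eq_iff_irreducible hm hzc).mpr (h m hm)]
  have hmonic : ((minpoly F c).comp (X ^ m)).Monic :=
    (minpoly.monic (Algebra.IsIntegral.isIntegral (R := F) c)).comp (monic_X_pow m)
      (by simp; omega)
  refine irreducible_of_aeval_eq_zero_of_natDegree_le (Algebra.IsIntegral.isIntegral (R := F) z)
    hmonic.ne_zero (by simp [aeval_comp, hz]) ?_
  rw [natDegree_comp, natDegree_X_pow, hdeg]

end AlgebraicExtension

section Descent

variable {F L : Type*} [Field F] [Field L] [Algebra F L] [Algebra.IsAlgebraic F L]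
  {a : F} {N : ℕ}

lemma le_of_pow_eq_adjoinSimple_gen (hN : 0 < N)
    (hD : ∀ (M : ℕ) (z : L), 0 < M → z ^ M = algebraMap F L a →
      M ∣ N * (minpoly F z).natDegree)
    {M : ℕ} (hM : 0 < M) {c : L} (hc : c ^ M = algebraMap F L a) {p : ℕ} (hp : 0 < p)
    {e : F⟮c⟯} (he : e ^ p = AdjoinSimple.gen F c) : p ≤ N := by
  have hec : (e : L) ^ p = c := by
    have := congrArg (algebraMap F⟮c⟯ L) he
    rwa [map_pow, AdjoinSimple.algebraMap_gen] at this
  have hce : c ∈ F⟮(e : L)⟯ := by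
    have := pow_mem (mem_adjoin_simple_self F (e : L)) p
    rwa [hec] at this
  have hadj : F⟮(e : L)⟯ = F⟮c⟯ :=
    le_antisymm (adjoin_simple_le_iff.mpr e.2) (adjoin_simple_le_iff.mpr hce)
  have hdeg : (minpoly F (e : L)).natDegree = (minpoly F c).natDegree := by
    rw [← adjoin.finrank (Algebra.IsIntegral.isIntegral (R := F) (e : L)),
      ← adjoin.finrank (Algebra.IsIntegral.isIntegral (R := F) c), hadj]
  have hdvd := hD (M * p) e (by positivity) (by rw [mul_comm, pow_mul, hec, hc])
  have hcM := natDegree_minpoly_le_of_pow_eq hM hc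
  have hpos := minpoly.natDegree_pos (Algebra.IsIntegral.isIntegral (R := F) c)
  rw [hdeg] at hdvd
  have := Nat.le_of_dvd (by positivity) hdvd
  nlinarith

lemma natDegree_minpoly_lt_of_not_heredIrreducible [IsAlgClosed L] (hN : 0 < N)
    (hD : ∀ (M : ℕ) (z : L), 0 < M → z ^ M = algebraMap F L a →
      M ∣ N * (minpoly F z).natDegree)
    {M : ℕ} (hM : 0 < M) {c : L} (hc : c ^ M = algebraMap F L a)
    (hbad : ¬ HeredIrreducible (minpoly F c)) {w : L} (hw : w ^ (4 * N !) = c) :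
    (minpoly F w).natDegree < 4 * N ! * (minpoly F c).natDegree := by
  have hK : 0 < 4 * N ! := by positivity
  have hwc : w ^ (4 * N !) = algebraMap F⟮c⟯ L (AdjoinSimple.gen F c) := by
    rw [AdjoinSimple.algebraMap_gen, hw]
  have hreducible : ¬ Irreducible (X ^ (4 * N !) - C (AdjoinSimple.gen F c)) := by
    refine fun hirr => hbad (heredIrreducible_minpoly_of_forall_irreducible fun m hm =>
      X_pow_sub_C_irreducible_of_forall_prime (fun p hp e he => ?_)
        (ne_neg_four_mul_pow_four_of_irreducible_X_pow_sub_C hirr (dvd_mul_right 4 _)) hm.ne')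
    have hpN := le_of_pow_eq_adjoinSimple_gen hN hD hM hc hp.pos he
    exact pow_ne_of_irreducible_X_pow_sub_C hirr
      (dvd_mul_of_dvd_right (Nat.dvd_factorial hp.pos hpN) 4) hp.ne_one e he
  have hlt : (minpoly F⟮c⟯ w).natDegree < 4 * N ! :=
    (natDegree_minpoly_le_of_pow_eq hK hwc).lt_of_ne
      fun h => hreducible ((natDegree_minpoly_eq_iff_irreducible hK hwc).mp h)
  rw [natDegree_minpoly_eq_mul_of_mem_adjoin (hw ▸ pow_mem (mem_adjoin_simple_self F w) _),
    mul_comm]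
  exact Nat.mul_lt_mul_of_lt_of_le hlt le_rfl
    (minpoly.natDegree_pos (Algebra.IsIntegral.isIntegral (R := F) c))

lemma mul_natDegree_minpoly_add_le_of_not_heredIrreducible [IsAlgClosed L] (hN : 0 < N)
    (hD : ∀ (M : ℕ) (z : L), 0 < M → z ^ M = algebraMap F L a →
      M ∣ N * (minpoly F z).natDegree)
    (j : ℕ) {z : L} (hz : z ^ (4 * N !) ^ j = algebraMap F L a)
    (hbad : ¬ HeredIrreducible (minpoly F z)) :
    N * (minpoly F z).natDegree + j * (4 * N !) ^ j ≤ N * (4 * N !) ^ j := by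
  have hK : 0 < 4 * N ! := by positivity
  induction j generalizing z with
  | zero =>
    simpa using Nat.mul_le_mul_left N (natDegree_minpoly_le_of_pow_eq one_pos (by simpa using hz))
  | succ j ih =>
    have hc : (z ^ (4 * N !)) ^ (4 * N !) ^ j = algebraMap F L a := by
      rw [← pow_mul, ← pow_succ', hz]
    have hcbad : ¬ HeredIrreducible (minpoly F (z ^ (4 * N !))) :=
      fun h => hbad (heredIrreducible_minpoly_of_pow_eq hK rfl h)
    have hlt := natDegree_minpoly_lt_of_not_heredIrreducible hN hD (pow_pos hK j) hc hcbad rfl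
    obtain ⟨s, hs⟩ := hD _ z (pow_pos hK _) hz
    obtain ⟨r, hr⟩ := hD _ _ (pow_pos hK j) hc
    have hP : 0 < (4 * N !) ^ j := pow_pos hK j
    have hrj : r + j ≤ N := by
      have := ih hc hcbad
      rw [hr] at this
      exact Nat.le_of_mul_le_mul_left (by nlinarith : (4 * N !) ^ j * (r + j) ≤ _ * N) hP
    have hsr : s < r := by
      have := Nat.mul_lt_mul_of_pos_left hlt hN
      rw [hs, mul_left_comm, hr, pow_succ, mul_comm _ (4 * N !), mul_assoc] at this
      exact Nat.lt_of_mul_lt_mul_left (Nat.lt_of_mul_lt_mul_left this)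
    rw [hs]
    have : (s + 1 + j) * (4 * N !) ^ (j + 1) ≤ N * (4 * N !) ^ (j + 1) :=
      Nat.mul_le_mul_right _ (by omega)
    linarith

theorem heredIrreducible_minpoly_of_pow_eq_of_dvd [IsAlgClosed L] (hN : 0 < N)
    (hD : ∀ (M : ℕ) (z : L), 0 < M → z ^ M = algebraMap F L a →
      M ∣ N * (minpoly F z).natDegree)
    {z : L} (hz : z ^ (4 * N !) ^ N = algebraMap F L a) : HeredIrreducible (minpoly F z) := by
  by_contra hbad
  have := mul_natDegree_minpoly_add_le_of_not_heredIrreducible hN hD N hz hbad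
  have := minpoly.natDegree_pos (Algebra.IsIntegral.isIntegral (R := F) z)
  nlinarith

end Descent

theorem hasGoodHeredity_X_sub_C_of_rootlessModtorElem {F : Type*} [Field F] {a : F}
    (ha : a ≠ 0) (hfin : RootlessModtorElem a) : HasGoodHeredity (X - C a) := by
  classical
  obtain ⟨N, hNS, hNmax⟩ := Set.exists_max_image _ id hfin
    ⟨1, one_pos, 1, a, ⟨1, one_pos, one_pow 1⟩, by rw [pow_one, one_mul]⟩
  have hD : ∀ (M : ℕ) (z : AlgebraicClosure F), 0 < M → z ^ M = algebraMap F _ a →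
      M ∣ N * (minpoly F z).natDegree :=
    fun M z hM hz => dvd_mul_natDegree_minpoly_of_pow_eq ha ⟨hNS, hNmax⟩ hM hz
  have hn : 0 < (4 * N !) ^ N := by positivity
  have hP : (X ^ (4 * N !) ^ N - C a : F[X]).Monic := monic_X_pow_sub_C a hn.ne'
  refine ⟨_, hn, UniqueFactorizationMonoid.normalizedFactors (X ^ (4 * N !) ^ N - C a),
    fun Q hQ => ?_, ?_⟩
  · obtain ⟨hQirr, hQmonic, hQdvd⟩ := (Polynomial.mem_normalizedFactors_iff hP.ne_zero).mp hQ
    obtain ⟨z, hz⟩ := IsAlgClosed.exists_aeval_eq_zero (AlgebraicClosure F) Q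
      (degree_pos_of_irreducible hQirr).ne'
    rw [minpoly.eq_of_irreducible_of_monic hQirr hz hQmonic]
    refine heredIrreducible_minpoly_of_pow_eq_of_dvd hNS.1 hD ?_
    simpa [sub_eq_zero] using aeval_eq_zero_of_dvd_aeval_eq_zero hQdvd hz
  · rw [sub_comp, X_comp, C_comp,
      UniqueFactorizationMonoid.prod_normalizedFactors_eq hP.ne_zero, hP.normalize_eq_self]

/-- For a field with only finitely many roots of unity, rootless, rootless modtor, and good
heredity of all linear polynomials (with acceptable roots) are equivalent. -/
theorem stmt9 {F : Type*} [Field F] (h : {a : F | IsRootOfUnityElem a}.Finite) :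
    (RootlessField F ↔ RootlessModtorField F) ∧
    (RootlessModtorField F ↔
      ∀ a : F, a ≠ 0 → ¬ IsRootOfUnityElem a → HasGoodHeredity (X - C a)) :=
  ⟨⟨RootlessField.rootlessModtorField h, RootlessModtorField.rootlessField⟩,
    fun hF a ha hator => hasGoodHeredity_X_sub_C_of_rootlessModtorElem ha (hF a ha hator),
    fun hgood =>
      RootlessField.rootlessModtorField h (rootlessField_of_forall_hasGoodHeredity hgood)⟩
end

section
/- For every prime p, the field ℚ_p of p-adic numbers is not rootless and does not have good heredity. More precisely, there exists α ∈ ℚ_p with α ≡ 1 modulo p, α not a root of unity, such that for every positive integer r not divisible by p the equation x^r = α has a solution in ℚ_p. -/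
open Polynomial

/-
An element `a` that is not rootless has `r`-th roots `β` for arbitrarily large `r`.
Then `X ^ n - C β` divides `X ^ (n * r) - C a`, so if `X ^ n - C a` were a product of hereditarily
irreducible `Q`, an irreducible factor of `X ^ n - C β` would be associated to some irreducible
`Q (X ^ r)`, of degree at least `r > n`. Hence a field of good heredity is rootless.
In `ℚ_p`, Hensel's lemma gives `r`-th roots of `1 + p` for every `r` prime to `p`.
-/

lemma isRootOfUnityElem_map_iff {M N F : Type*} [Monoid M] [Monoid N] [FunLike F M N]
    [MonoidHomClass F M N] {f : F} (hf : Function.Injective f) {a : M} :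
    IsRootOfUnityElem (f a) ↔ IsRootOfUnityElem a := by
  simp only [IsRootOfUnityElem, ← map_pow, ← map_one f, hf.eq_iff]

lemma not_isRootOfUnityElem_natCast {R : Type*} [Semiring R] [CharZero R] {m : ℕ}
    (hm : 1 < m) : ¬ IsRootOfUnityElem (m : R) := by
  rintro ⟨n, hn, h⟩
  rw [← Nat.cast_pow, Nat.cast_eq_one] at h
  exact (Nat.one_lt_pow hn.ne' hm).ne' h

lemma not_rootlessElem_of_forall_not_dvd {F : Type*} [Field F] {a : F} {p : ℕ} (hp : 1 < p)
    (h : ∀ r, ¬ p ∣ r → ∃ x : F, x ^ r = a) : ¬ RootlessElem a := by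
  refine Set.infinite_of_forall_exists_gt fun n =>
    ⟨n * p + 1, ⟨Nat.succ_pos _, h _ ?_⟩, by nlinarith⟩
  rw [Nat.dvd_add_right (dvd_mul_left p n), Nat.dvd_one]
  exact hp.ne'

lemma X_pow_sub_C_dvd_comp_X_pow {R : Type*} [CommRing R] {β a : R} {r : ℕ} (hβ : β ^ r = a)
    (n : ℕ) : X ^ n - C β ∣ (X ^ n - C a).comp (X ^ r) := by
  rw [sub_comp, pow_comp, X_comp, C_comp, ← pow_mul, mul_comm, pow_mul, ← hβ, C_pow]
  exact sub_dvd_pow_sub_pow _ _ r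

lemma HeredIrreducible.le_natDegree_of_dvd_comp {F : Type*} [Field F] {Q d : F[X]}
    (hQ : HeredIrreducible Q) (hd : Irreducible d) {r : ℕ} (hr : 0 < r)
    (hdvd : d ∣ Q.comp (X ^ r)) : r ≤ d.natDegree := by
  have hQpos : 0 < Q.natDegree := by simpa using (hQ 1 one_pos).natDegree_pos
  rw [natDegree_eq_of_degree_eq (degree_eq_degree_of_associated
    (hd.associated_of_dvd (hQ r hr) hdvd)), natDegree_comp, natDegree_X_pow]
  exact Nat.le_mul_of_pos_left r hQpos

lemma rootlessElem_of_hasGoodHeredity_X_sub_C {F : Type*} [Field F] {a : F}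
    (h : HasGoodHeredity (X - C a)) : RootlessElem a := by
  obtain ⟨n, hn, l, hl, hprod⟩ := h
  rw [sub_comp, X_comp, C_comp] at hprod
  by_contra hinf
  obtain ⟨r, ⟨hr, β, hβ⟩, hnr⟩ := Set.Infinite.exists_gt hinf n
  have hne : X ^ n - C β ≠ 0 := X_pow_sub_C_ne_zero hn β
  obtain ⟨d, hd, hdβ⟩ := WfDvdMonoid.exists_irreducible_factor
    (not_isUnit_of_natDegree_pos _ (by rwa [natDegree_X_pow_sub_C])) hne
  have hdl : d ∣ (l.map (·.comp (X ^ r))).prod := by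
    rw [← multiset_prod_comp, ← hprod]
    exact hdβ.trans (X_pow_sub_C_dvd_comp_X_pow hβ n)
  obtain ⟨_, hmem, hdQ⟩ := hd.prime.exists_mem_multiset_dvd hdl
  obtain ⟨Q, hQ, rfl⟩ := Multiset.mem_map.mp hmem
  have hrd := (hl Q hQ).le_natDegree_of_dvd_comp hd hr hdQ
  have hdn := natDegree_le_of_dvd hdβ hne
  rw [natDegree_X_pow_sub_C] at hdn
  omega

theorem rootlessField_of_goodHeredityField {F : Type*} [Field F] (h : GoodHeredityField F) :
    RootlessField F := by
  intro a ha htor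
  refine rootlessElem_of_hasGoodHeredity_X_sub_C (h _ fun b hb => ?_)
  have hinj := (algebraMap F (AlgebraicClosure F)).injective
  rw [map_sub, aeval_X, aeval_C, sub_eq_zero] at hb
  subst hb
  exact ⟨(map_ne_zero_iff _ hinj).mpr ha, (isRootOfUnityElem_map_iff hinj).not.mpr htor⟩

theorem PadicInt.exists_pow_eq_of_norm_sub_one_lt_one {p : ℕ} [Fact p.Prime] {u : ℤ_[p]}
    (hu : ‖u - 1‖ < 1) {r : ℕ} (hr : ¬ p ∣ r) : ∃ x : ℤ_[p], x ^ r = u := by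
  have hr1 : ‖(r : ℤ_[p])‖ = 1 := by
    simpa using (Nat.Prime.coprime_iff_not_dvd Fact.out).mpr hr
  obtain ⟨x, hx, -⟩ := hensels_lemma (p := p) (F := X ^ r - C u) (a := 1)
    (by simpa [derivative_X_pow, hr1, norm_sub_rev] using hu)
  exact ⟨x, sub_eq_zero.mp (by simpa using hx)⟩

/-- `ℚ_p` is not rootless and not of good heredity: there is `α ≡ 1 mod p`, not a root of
unity, admitting `r`-th roots for every positive `r` prime to `p`. -/
theorem stmt16 (p : ℕ) [Fact p.Prime] :
    ¬ RootlessField ℚ_[p] ∧ ¬ GoodHeredityField ℚ_[p] ∧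
    ∃ α : ℚ_[p], ‖α - 1‖ < 1 ∧ ¬ IsRootOfUnityElem α ∧
      ∀ r : ℕ, 0 < r → ¬ (p : ℕ) ∣ r → ∃ x : ℚ_[p], x ^ r = α := by
  have hp : 1 < p := (Fact.out : p.Prime).one_lt
  have hnorm : ‖((1 + p : ℕ) : ℤ_[p]) - 1‖ < 1 := by
    simpa using PadicInt.norm_natCast_lt_one_iff.mpr (dvd_refl p)
  have hroots (r : ℕ) (hr : ¬ p ∣ r) : ∃ x : ℚ_[p], x ^ r = ((1 + p : ℕ) : ℚ_[p]) := by
    obtain ⟨x, hx⟩ := PadicInt.exists_pow_eq_of_norm_sub_one_lt_one hnorm hr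
    exact ⟨x, by rw [← PadicInt.coe_pow, hx, PadicInt.coe_natCast]⟩
  have htor : ¬ IsRootOfUnityElem ((1 + p : ℕ) : ℚ_[p]) :=
    not_isRootOfUnityElem_natCast (by omega)
  have hnot : ¬ RootlessField ℚ_[p] := fun h =>
    not_rootlessElem_of_forall_not_dvd hp hroots (h _ (Nat.cast_ne_zero.mpr (by omega)) htor)
  refine ⟨hnot, fun h => hnot (rootlessField_of_goodHeredityField h), _, ?_, htor,
    fun r _ hr => hroots r hr⟩
  rw [Nat.cast_add, Nat.cast_one, add_sub_cancel_left]
  exact Padic.norm_p_lt_one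
end
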